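/- Let A ∈ ℝ^{n×n} and h < k be real numbers (possibly h = −∞ or k = +∞ interpreted as absent constraints). Suppose A = (J−R)Q with J skew-symmetric, R symmetric, Q symmetric positive definite, and kQ⁻¹ − R and R − hQ⁻¹ are both positive definite. Then every eigenvalue λ of A satisfies −k < Re(λ) < −h. -/

import Mathlib

/-!
Put `w = Q v` for an eigenvector `v` of `A = (J - R) Q` with eigenvalue `λ`. Then `(J - R) w = λ Q⁻¹ w`,
and pairing with `w` gives `Re λ · w*Q⁻¹w = -w*Rw`, because `w*Jw` is purely imaginary for skew `J`.
Since `w*Q⁻¹w > 0`, the two definiteness hypotheses `w*Rw < k w*Q⁻¹w` and `h w*Q⁻¹w < w*Rw`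
turn into `-k < Re λ < -h`.
-/

open Matrix Complex
open scoped ComplexOrder MatrixOrder

namespace Matrix

variable {ι : Type*}

section Complex

variable [Fintype ι]

lemma re_star_dotProduct_mulVec_self_eq_zero {J : Matrix ι ι ℂ} (hJ : Jᴴ = -J) (x : ι → ℂ) :
    (star x ⬝ᵥ J *ᵥ x).re = 0 := by
  have hIJ : (I • J).IsHermitian := by
    rw [IsHermitian, conjTranspose_smul, hJ, star_def, conj_I, smul_neg, neg_smul, neg_neg]
  simpa [smul_mulVec, dotProduct_smul] using hIJ.im_star_dotProduct_mulVec_self x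

lemma re_mul_re_star_dotProduct_mulVec_self {J R S : Matrix ι ι ℂ} {lam : ℂ} {w : ι → ℂ}
    (hJ : Jᴴ = -J) (hS : S.IsHermitian) (hw : (J - R) *ᵥ w = lam • S *ᵥ w) :
    lam.re * (star w ⬝ᵥ S *ᵥ w).re = -(star w ⬝ᵥ R *ᵥ w).re := by
  have hform : star w ⬝ᵥ (J - R) *ᵥ w = lam * (star w ⬝ᵥ S *ᵥ w) := by
    rw [hw, dotProduct_smul, smul_eq_mul]
  have him : (star w ⬝ᵥ S *ᵥ w).im = 0 := hS.im_star_dotProduct_mulVec_self w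
  have hre := congrArg re hform
  rw [sub_mulVec, dotProduct_sub, sub_re, re_star_dotProduct_mulVec_self_eq_zero hJ, mul_re,
    him] at hre
  linarith

lemma re_mem_Ioo_of_posDef {J R S : Matrix ι ι ℂ} {lam : ℂ} {w : ι → ℂ} {h k : ℝ}
    (hJ : Jᴴ = -J) (hS : S.PosDef) (hw0 : w ≠ 0) (hw : (J - R) *ᵥ w = lam • S *ᵥ w)
    (hk : (k • S - R).PosDef) (hh : (R - h • S).PosDef) :
    lam.re ∈ Set.Ioo (-k) (-h) := by
  have hid := re_mul_re_star_dotProduct_mulVec_self hJ hS.isHermitian hw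
  have hSpos := hS.re_dotProduct_pos hw0
  have hkpos := hk.re_dotProduct_pos hw0
  have hhpos := hh.re_dotProduct_pos hw0
  simp only [sub_mulVec, smul_mulVec, dotProduct_sub, dotProduct_smul, RCLike.re_to_complex,
    sub_re, smul_re, smul_eq_mul] at hSpos hkpos hhpos
  exact ⟨by nlinarith, by nlinarith⟩

end Complex

section OfReal

lemma conjTranspose_map_ofReal (M : Matrix ι ι ℝ) : (M.map ofReal)ᴴ = Mᵀ.map ofReal := by
  ext i j
  simp

variable [Fintype ι]

lemma map_ofReal_mul (M N : Matrix ι ι ℝ) : (M * N).map ofReal = M.map ofReal * N.map ofReal :=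
  Matrix.map_mul (f := ofRealHom)

lemma PosDef.map_ofReal [DecidableEq ι] {M : Matrix ι ι ℝ} (hM : M.PosDef) :
    (M.map ofReal).PosDef := by
  obtain ⟨B, hB⟩ := CStarAlgebra.nonneg_iff_eq_star_mul_self.mp hM.posSemidef.nonneg
  have hmap : M.map ofReal = (B.map ofReal)ᴴ * B.map ofReal := by
    rw [hB, conjTranspose_map_ofReal, star_eq_conjTranspose,
      conjTranspose_eq_transpose_of_trivial, map_ofReal_mul]
  rw [hmap, (posSemidef_conjTranspose_mul_self _).posDef_iff_isUnit, ← hmap]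
  exact hM.isUnit.map ofRealHom.mapMatrix

end OfReal

end Matrix

theorem stmt_4_general {n : ℕ} (A J R Q : Matrix (Fin n) (Fin n) ℝ) (h k : ℝ)
    (hJ : Jᵀ = -J) (hQ : Q.PosDef) (hA : A = (J - R) * Q)
    (hk' : (k • Q⁻¹ - R).PosDef) (hh' : (R - h • Q⁻¹).PosDef) :
    ∀ (lam : ℂ) (v : Fin n → ℂ), v ≠ 0 → (A.map (Complex.ofReal)) *ᵥ v = lam • v →
      -k < lam.re ∧ lam.re < -h := by
  intro lam v hv heig
  set w := Q.map ofReal *ᵥ v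
  have hv_eq : Q⁻¹.map ofReal *ᵥ w = v := by
    rw [mulVec_mulVec, ← map_ofReal_mul, nonsing_inv_mul _ hQ.det_pos.ne'.isUnit]
    simp
  have hw0 : w ≠ 0 := fun hw => hv (by rw [← hv_eq, hw, mulVec_zero])
  have hw : (J.map ofReal - R.map ofReal) *ᵥ w = lam • Q⁻¹.map ofReal *ᵥ w := by
    rw [hv_eq, ← heig, mulVec_mulVec, hA, map_ofReal_mul, Matrix.map_sub _ ofReal_sub]
  have hJc : (J.map ofReal)ᴴ = -J.map ofReal := by
    rw [conjTranspose_map_ofReal, hJ, Matrix.map_neg _ ofReal_neg]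
  refine re_mem_Ioo_of_posDef hJc hQ.inv.map_ofReal hw0 hw ?_ ?_
  · convert hk'.map_ofReal using 1; ext; simp
  · convert hh'.map_ofReal using 1; ext; simp

theorem stmt_4 {n : ℕ} (A J R Q : Matrix (Fin n) (Fin n) ℝ) (h k : ℝ) (hhk : h < k)
    (hJ : Jᵀ = -J) (hR : Rᵀ = R) (hQ : Q.PosDef) (hA : A = (J - R) * Q)
    (hk' : (k • Q⁻¹ - R).PosDef) (hh' : (R - h • Q⁻¹).PosDef) :
    ∀ (lam : ℂ) (v : Fin n → ℂ), v ≠ 0 → (A.map (Complex.ofReal)) *ᵥ v = lam • v →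
      -k < lam.re ∧ lam.re < -h :=
  stmt_4_general A J R Q h k hJ hQ hA hk' hh'
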